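/- Let G be a complete multi-partite graph and c an edge-coloring of G with no rainbow K_k using the maximum possible number of colors. Then any two vertices x, y lying in a common partite set satisfy d^s(x) = d^s(y), where d^s(v) is the number of colors saturated by v. -/

import Mathlib

/-!
If `x` and `y` are non-adjacent twins (as two vertices of a common partite set are), recolor every
edge `yz` with the color of `xz`, replacing each color saturated by `x` by a fresh color. A rainbow
clique of the new coloring through `y` becomes, after swapping `x` and `y`, a rainbow clique of the
old one, so the new coloring is still admissible. It loses at most the `d^s(y)` colors saturated by
`y` and gains the `d^s(x)` fresh ones, so maximality of `c` forces `d^s(x) ≤ d^s(y)`.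
-/

open Classical

noncomputable section

/-- A rainbow `k`-clique in the edge-colored graph `G^c`. -/
def HasRainbowClique {V : Type*} (G : SimpleGraph V) (c : Sym2 V → ℕ) (k : ℕ) : Prop :=
  ∃ S : Finset V, S.card = k ∧ (∀ x ∈ S, ∀ y ∈ S, x ≠ y → G.Adj x y) ∧
    ∀ x ∈ S, ∀ y ∈ S, ∀ z ∈ S, ∀ w ∈ S,
      x ≠ y → z ≠ w → c s(x, y) = c s(z, w) → s(x, y) = s(z, w)

/-- The number of colors used on the edges of `G`. -/
noncomputable def ncolors {V : Type*} (G : SimpleGraph V) (c : Sym2 V → ℕ) : ℕ :=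
  (c '' G.edgeSet).ncard

/-- The anti-Ramsey number `ar(G, K_k)`: the maximum number of colors of an
edge-coloring of `G` without a rainbow `K_k`. -/
noncomputable def antiRamsey {V : Type*} (G : SimpleGraph V) (k : ℕ) : ℕ :=
  sSup {m | ∃ c : Sym2 V → ℕ, ¬ HasRainbowClique G c k ∧ ncolors G c = m}

/-- A color `a` is saturated by the vertex `x`: some edge has color `a` and every
edge of color `a` is incident to `x`. -/
def Saturates {V : Type*} (G : SimpleGraph V) (c : Sym2 V → ℕ) (x : V) (a : ℕ) : Prop :=
  (∃ e ∈ G.edgeSet, c e = a) ∧ ∀ e ∈ G.edgeSet, c e = a → x ∈ e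

/-- The set of colors saturated by `x`. -/
def satColors {V : Type*} (G : SimpleGraph V) (c : Sym2 V → ℕ) (x : V) : Set ℕ :=
  {a | Saturates G c x a}

/-- The saturated color degree `d^s(x)`. -/
noncomputable def satDegree {V : Type*} (G : SimpleGraph V) (c : Sym2 V → ℕ) (x : V) : ℕ :=
  (satColors G c x).ncard

/-- The complete multipartite graph `K_{n 0, …, n (r-1)}` with partite sets
`U_i = {i} × Fin (n i)`. -/
def KMP (r : ℕ) (n : ℕ → ℕ) : SimpleGraph (Σ i : Fin r, Fin (n i)) :=
  SimpleGraph.completeMultipartiteGraph (fun i : Fin r => Fin (n i))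

open Equiv

section Rainbow

variable {V : Type*} (G : SimpleGraph V) (c : Sym2 V → ℕ)

def IsRainbowOn (S : Finset V) : Prop :=
  ∀ x ∈ S, ∀ y ∈ S, ∀ z ∈ S, ∀ w ∈ S,
    x ≠ y → z ≠ w → c s(x, y) = c s(z, w) → s(x, y) = s(z, w)

theorem hasRainbowClique_iff {k : ℕ} :
    HasRainbowClique G c k ↔
      ∃ S : Finset V, S.card = k ∧ G.IsClique (S : Set V) ∧ IsRainbowOn c S :=
  Iff.rfl

theorem IsRainbowOn.map {W : Type*} {c' : Sym2 W → ℕ} {S : Finset W} (φ : W ↪ V)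
    (hS : IsRainbowOn c' S)
    (h : ∀ u ∈ S, ∀ v ∈ S, ∀ z ∈ S, ∀ w ∈ S, u ≠ v → z ≠ w →
      c s(φ u, φ v) = c s(φ z, φ w) → c' s(u, v) = c' s(z, w)) :
    IsRainbowOn c (S.map φ) := by
  simp only [IsRainbowOn, Finset.mem_map]
  rintro _ ⟨u, hu, rfl⟩ _ ⟨v, hv, rfl⟩ _ ⟨z, hz, rfl⟩ _ ⟨w, hw, rfl⟩ huv hzw hcol
  have huv' : u ≠ v := fun h' => huv (h' ▸ rfl)
  have hzw' : z ≠ w := fun h' => hzw (h' ▸ rfl)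
  have heq := hS u hu v hv z hz w hw huv' hzw' (h u hu v hv z hz w hw huv' hzw' hcol)
  simpa using congrArg (Sym2.map φ) heq

theorem satColors_subset (x : V) : satColors G c x ⊆ c '' G.edgeSet := fun _ ha => ha.1

theorem ncolors_le_antiRamsey [Finite V] {k : ℕ} (hc : ¬ HasRainbowClique G c k) :
    ncolors G c ≤ antiRamsey G k :=
  le_csSup ⟨G.edgeSet.ncard, by
    rintro _ ⟨c', -, rfl⟩
    exact Set.ncard_image_le (Set.toFinite _)⟩ ⟨c, hc, rfl⟩

end Rainbow

section Recoloring

variable {V : Type*} (G : SimpleGraph V) (c : Sym2 V → ℕ) (x y : V) (M : ℕ)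

/-- When `M` bounds the colors of `c`, `a + M + 1` is a color that `c` does not use. -/
def freshCopy (a : ℕ) : ℕ :=
  if Saturates G c x a then a + M + 1 else a

def twinRecoloring (e : Sym2 V) : ℕ :=
  if y ∈ e then freshCopy G c x M (c (e.map (swap x y))) else c e

variable {G c x y M}

theorem freshCopy_of_saturates {a : ℕ} (h : Saturates G c x a) :
    freshCopy G c x M a = a + M + 1 :=
  if_pos h

theorem freshCopy_of_not_saturates {a : ℕ} (h : ¬ Saturates G c x a) : freshCopy G c x M a = a :=
  if_neg h

theorem twinRecoloring_of_mem {e : Sym2 V} (h : y ∈ e) :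
    twinRecoloring G c x y M e = freshCopy G c x M (c (e.map (swap x y))) :=
  if_pos h

theorem twinRecoloring_of_not_mem {e : Sym2 V} (h : y ∉ e) : twinRecoloring G c x y M e = c e :=
  if_neg h

theorem mem_map_swap_left_iff {e : Sym2 V} : x ∈ e.map (swap x y) ↔ y ∈ e := by
  simp [Sym2.mem_map, swap_apply_eq_iff]

theorem twinRecoloring_of_not_saturates {e : Sym2 V} (hxy : x ∈ e → y ∈ e)
    (h : ¬ Saturates G c x (c (e.map (swap x y)))) :
    twinRecoloring G c x y M e = c (e.map (swap x y)) := by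
  by_cases hy : y ∈ e
  · rw [twinRecoloring_of_mem hy, freshCopy_of_not_saturates h]
  · have hx : x ∉ e := mt hxy hy
    rw [twinRecoloring_of_not_mem hy, Sym2.map_congr (g := id), Sym2.map_id, id]
    intro v hv
    exact swap_apply_of_ne_of_ne (ne_of_mem_of_not_mem hv hx) (ne_of_mem_of_not_mem hv hy)

theorem twinRecoloring_eq_of_eq {d₁ d₂ : Sym2 V} (hd₁ : d₁.map (swap x y) ∈ G.edgeSet)
    (hd₂ : d₂.map (swap x y) ∈ G.edgeSet)
    (hxy₁ : x ∈ d₁ → y ∈ d₁) (hxy₂ : x ∈ d₂ → y ∈ d₂)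
    (h : c (d₁.map (swap x y)) = c (d₂.map (swap x y))) :
    twinRecoloring G c x y M d₁ = twinRecoloring G c x y M d₂ := by
  by_cases hsat : Saturates G c x (c (d₁.map (swap x y)))
  · have hy₁ : y ∈ d₁ := mem_map_swap_left_iff.1 (hsat.2 _ hd₁ rfl)
    have hy₂ : y ∈ d₂ := mem_map_swap_left_iff.1 (hsat.2 _ hd₂ h.symm)
    rw [twinRecoloring_of_mem hy₁, twinRecoloring_of_mem hy₂, h]
  · rw [twinRecoloring_of_not_saturates hxy₁ hsat,
      twinRecoloring_of_not_saturates hxy₂ (h ▸ hsat), h]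

end Recoloring

section Twins

variable {V : Type*} {G : SimpleGraph V} {x y : V}

theorem not_adj_of_twins (htwin : ∀ z, G.Adj x z ↔ G.Adj y z) : ¬ G.Adj x y :=
  fun h => ((htwin y).1 h).ne rfl

theorem adj_swap_swap_iff (htwin : ∀ z, G.Adj x z ↔ G.Adj y z) {u v : V} :
    G.Adj (swap x y u) (swap x y v) ↔ G.Adj u v := by
  grind [G.adj_comm]

theorem isClique_map_swap (htwin : ∀ z, G.Adj x z ↔ G.Adj y z) {S : Finset V}
    (hS : G.IsClique (S : Set V)) : G.IsClique (S.map (swap x y).toEmbedding : Set V) := by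
  rintro _ hu _ hv huv
  simp only [Finset.coe_map, Set.mem_image, Finset.mem_coe] at hu hv
  obtain ⟨u, hu, rfl⟩ := hu
  obtain ⟨v, hv, rfl⟩ := hv
  exact (adj_swap_swap_iff htwin).2 (hS hu hv fun h => huv (h ▸ rfl))

variable {c : Sym2 V → ℕ} {M : ℕ}

theorem not_hasRainbowClique_twinRecoloring (htwin : ∀ z, G.Adj x z ↔ G.Adj y z) {k : ℕ}
    (hc : ¬ HasRainbowClique G c k) : ¬ HasRainbowClique G (twinRecoloring G c x y M) k := by
  rw [hasRainbowClique_iff] at hc ⊢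
  rintro ⟨S, hcard, hS, hrainbow⟩
  by_cases hyS : y ∈ S
  · have hxS : ∀ u ∈ S, u = x → u = y := fun u hu hux =>
      by_contra fun huy => not_adj_of_twins htwin (hux ▸ hS hu hyS huy)
    have hxy_mem : ∀ u ∈ S, ∀ v ∈ S, x ∈ s(u, v) → y ∈ s(u, v) := by
      intro u hu v hv hx
      rcases Sym2.mem_iff.1 hx with rfl | rfl
      · simp [hxS _ hu rfl]
      · simp [hxS _ hv rfl]
    have hedge : ∀ u ∈ S, ∀ v ∈ S, u ≠ v → s(u, v).map (swap x y) ∈ G.edgeSet :=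
      fun u hu v hv huv => (adj_swap_swap_iff htwin).2 (hS hu hv huv)
    refine hc ⟨S.map (swap x y).toEmbedding, by simpa using hcard,
      isClique_map_swap htwin hS,
      hrainbow.map _ _ fun u hu v hv z hz w hw huv hzw hcol => ?_⟩
    exact twinRecoloring_eq_of_eq (hedge u hu v hv huv) (hedge z hz w hw hzw)
      (hxy_mem u hu v hv) (hxy_mem z hz w hw) hcol
  · have hcol : ∀ u ∈ S, ∀ v ∈ S, twinRecoloring G c x y M s(u, v) = c s(u, v) :=
      fun u hu v hv => twinRecoloring_of_not_mem <| by
        rw [Sym2.mem_iff, not_or]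
        exact ⟨fun h => hyS (h ▸ hu), fun h => hyS (h ▸ hv)⟩
    refine hc ⟨S, hcard, hS, fun u hu v hv z hz w hw huv hzw h => ?_⟩
    exact hrainbow u hu v hv z hz w hw huv hzw (by rwa [hcol u hu v hv, hcol z hz w hw])

theorem mem_image_twinRecoloring_of_not_mem_satColors {b : ℕ} (hb : b ∈ c '' G.edgeSet)
    (hby : b ∉ satColors G c y) : b ∈ twinRecoloring G c x y M '' G.edgeSet := by
  obtain ⟨e, he, hce, hye⟩ : ∃ e ∈ G.edgeSet, c e = b ∧ y ∉ e := by
    by_contra! h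
    exact hby ⟨hb, h⟩
  exact ⟨e, he, by rw [twinRecoloring_of_not_mem hye, hce]⟩

theorem add_mem_image_twinRecoloring (htwin : ∀ z, G.Adj x z ↔ G.Adj y z) {a : ℕ}
    (ha : a ∈ satColors G c x) : a + M + 1 ∈ twinRecoloring G c x y M '' G.edgeSet := by
  obtain ⟨⟨e, he, hce⟩, hall⟩ := id ha
  obtain ⟨z, rfl⟩ := Sym2.mem_iff_exists.1 (hall e he hce)
  have hxz : G.Adj x z := he
  have hzy : z ≠ y := fun h => not_adj_of_twins htwin (h ▸ hxz)
  refine ⟨s(y, z), (htwin z).1 hxz, ?_⟩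
  rw [twinRecoloring_of_mem (Sym2.mem_mk_left y z), Sym2.map_mk, swap_apply_right,
    swap_apply_of_ne_of_ne hxz.ne.symm hzy, hce, freshCopy_of_saturates ha]

theorem ncolors_add_satDegree_le [Finite V] (htwin : ∀ z, G.Adj x z ↔ G.Adj y z)
    (hM : M ∈ upperBounds (c '' G.edgeSet)) :
    ncolors G c + satDegree G c x ≤ ncolors G (twinRecoloring G c x y M) + satDegree G c y := by
  have hN : (c '' G.edgeSet).Finite := G.edgeSet.toFinite.image c
  have hsub : (c '' G.edgeSet \ satColors G c y) ∪ (· + M + 1) '' satColors G c x ⊆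
      twinRecoloring G c x y M '' G.edgeSet :=
    Set.union_subset (fun b hb => mem_image_twinRecoloring_of_not_mem_satColors hb.1 hb.2)
      (Set.image_subset_iff.2 fun a ha => add_mem_image_twinRecoloring htwin ha)
  have hdisj : Disjoint (c '' G.edgeSet \ satColors G c y) ((· + M + 1) '' satColors G c x) :=
    Set.disjoint_left.2 <| by
      rintro _ hb ⟨a, -, rfl⟩
      have := hM hb.1
      dsimp only at this
      omega
  have hcard := Set.ncard_le_ncard hsub
  rw [Set.ncard_union_eq hdisj hN.sdiff ((hN.subset (satColors_subset G c x)).image _),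
    Set.ncard_image_of_injective _ fun _ _ h => by simpa using h] at hcard
  have hsplit := Set.ncard_sdiff_add_ncard_of_subset (satColors_subset G c y) hN
  unfold ncolors satDegree
  omega

end Twins

theorem satDegree_le_of_twins {V : Type*} [Finite V] {G : SimpleGraph V} {c : Sym2 V → ℕ}
    {k : ℕ} (hc : ¬ HasRainbowClique G c k) (hmax : ncolors G c = antiRamsey G k) {x y : V}
    (htwin : ∀ z, G.Adj x z ↔ G.Adj y z) : satDegree G c x ≤ satDegree G c y := by
  obtain ⟨M, hM⟩ := (G.edgeSet.toFinite.image c).bddAbove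
  have hcount := ncolors_add_satDegree_le htwin hM
  have hle := ncolors_le_antiRamsey G _ (not_hasRainbowClique_twinRecoloring (M := M) htwin hc)
  omega

/-- In an extremal coloring for `ar(G, K_k)` of a complete multipartite graph `G`,
two vertices of a common partite set have the same saturated color degree. -/
theorem satDegree_eq_of_same_part (r : ℕ) (n : ℕ → ℕ) (k : ℕ)
    (c : Sym2 (Σ i : Fin r, Fin (n i)) → ℕ)
    (hnr : ¬ HasRainbowClique (KMP r n) c k)
    (hmax : ncolors (KMP r n) c = antiRamsey (KMP r n) k)
    (x y : Σ i : Fin r, Fin (n i)) (hxy : x.1 = y.1) :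
    satDegree (KMP r n) c x = satDegree (KMP r n) c y := by
  have htwin : ∀ z, (KMP r n).Adj x z ↔ (KMP r n).Adj y z := fun z =>
    show x.1 ≠ z.1 ↔ y.1 ≠ z.1 by rw [hxy]
  exact le_antisymm (satDegree_le_of_twins hnr hmax htwin)
    (satDegree_le_of_twins hnr hmax fun z => (htwin z).symm)
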